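/- Let α ∈ [0,1], n ≥ 2, and let a_0, …, a_n be independent real-valued random variables with P(a_i > 0) = α and P(a_i < 0) = 1 − α for every i. Then for every integer k ≥ 0, the probability p_{k,n} of exactly k sign changes satisfies the recursion p_{k,n} = α(1−α)·(p_{k−2,n−2} − p_{k,n−2}) + p_{k,n−1}, with the convention that p_{j,N} = 0 for j < 0. -/

import Mathlib

open MeasureTheory ProbabilityTheory

/-- Number of sign changes of the sequence `a 0, a 1, …, a N` (there are `N`
consecutive pairs): the number of indices `0 ≤ i ≤ N - 1` with `a i * a (i+1) < 0`. -/
noncomputable def signChanges {Ω : Type*} (a : ℕ → Ω → ℝ) (N : ℕ) (ω : Ω) : ℕ :=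
  ((Finset.range N).filter fun i => a i ω * a (i + 1) ω < 0).card

/-- `p k N`: the probability that `(a 0, …, a N)` has exactly `k` sign changes. -/
noncomputable def signChangeProb {Ω : Type*} [MeasurableSpace Ω] (μ : Measure Ω)
    (a : ℕ → Ω → ℝ) (k N : ℕ) : ℝ :=
  (μ {ω | signChanges a N ω = k}).toReal

/-!
Write `S_N` for the number of sign changes of `(a_0, …, a_N)` and `X_N` for the event
`a_N a_{N+1} < 0`, so that `S_{N+1} = S_N + 1_{X_N}` and therefore
`p_{k,n} - p_{k,n-1} = P(S_{n-1} + 1 = k, X_{n-1}) - P(S_{n-1} = k, X_{n-1})`.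
Given `a_0, …, a_{n-2}`, each of the events `X_{n-2}ᶜ ∩ X_{n-1}` and `X_{n-2} ∩ X_{n-1}` fixes
the signs of `a_{n-1}` and `a_n` to be opposite, so it has conditional probability `α(1-α)`
whatever the sign of `a_{n-2}`. Hence `P(S_{n-1} = j, X_{n-1}) = α(1-α)(p_{j,n-2} + p_{j-1,n-2})`,
and the two terms `p_{k-1,n-2}` cancel.
-/

lemma signChanges_succ {Ω : Type*} (a : ℕ → Ω → ℝ) (N : ℕ) (ω : Ω) :
    signChanges a (N + 1) ω =
      signChanges a N ω + if a N ω * a (N + 1) ω < 0 then 1 else 0 := by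
  rw [signChanges, signChanges, Finset.range_add_one, Finset.filter_insert]
  split_ifs <;> simp [Finset.card_insert_of_notMem]

lemma measurable_signChanges {Ω : Type*} {_ : MeasurableSpace Ω} {a : ℕ → Ω → ℝ} {N : ℕ}
    (ha : ∀ i ≤ N, Measurable (a i)) : Measurable (signChanges a N) := by
  classical
  have hsum : signChanges a N =
      fun ω => ∑ i ∈ Finset.range N, if a i ω * a (i + 1) ω < 0 then 1 else 0 := by
    funext ω
    rw [signChanges, Finset.card_filter]
  rw [hsum]
  refine Finset.measurable_sum _ fun i hi => Measurable.ite ?_ measurable_const measurable_const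
  have hiN := Finset.mem_range.mp hi
  exact measurableSet_lt ((ha i hiN.le).mul (ha (i + 1) hiN)) measurable_const

lemma measurableSet_signChanges_add_eq {Ω : Type*} {_ : MeasurableSpace Ω} {a : ℕ → Ω → ℝ}
    {N : ℕ} (ha : ∀ i ≤ N, Measurable (a i)) (c j : ℕ) :
    MeasurableSet {ω | signChanges a N ω + c = j} :=
  measurable_signChanges ha (MeasurableSet.of_discrete (s := {x | x + c = j}))

theorem ProbabilityTheory.iIndepFun.measure_inter_preimage_eq_mul_of_notMem
    {Ω ι : Type*} [MeasurableSpace Ω] {μ : Measure Ω} {β : ι → Type*}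
    [mβ : ∀ i, MeasurableSpace (β i)] {f : ∀ i, Ω → β i} (hf : ∀ i, Measurable (f i))
    (h : iIndepFun f μ) {S : Set ι} {j : ι} (hj : j ∉ S) {A : Set Ω}
    (hA : MeasurableSet[⨆ i ∈ S, (mβ i).comap (f i)] A) {B : Set (β j)} (hB : MeasurableSet B) :
    μ (A ∩ f j ⁻¹' B) = μ A * μ (f j ⁻¹' B) := by
  have hind := indep_iSup_of_disjoint (fun i => (hf i).comap_le)
    ((iIndepFun_iff_iIndep _ _ _).mp h) (Set.disjoint_singleton_right.mpr hj)
  exact (Indep_iff _ _ μ).mp hind A _ hA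
    (le_iSup₂ (f := fun i (_ : i ∈ ({j} : Set ι)) => (mβ i).comap (f i)) j rfl _ ⟨B, hB, rfl⟩)

section

variable {Ω : Type*} {a : ℕ → Ω → ℝ} {n : ℕ}

local notation "𝓕" N:max => ⨆ i ≤ N, MeasurableSpace.comap (a i) (inferInstance : MeasurableSpace ℝ)

lemma measurable_iSup_comap_of_le {i N : ℕ} (hiN : i ≤ N) : Measurable[𝓕 N] (a i) :=
  measurable_iff_comap_le.mpr (le_iSup₂_of_le i hiN le_rfl)

lemma disjoint_setOf_pos_neg (f : Ω → ℝ) : Disjoint {ω | 0 < f ω} {ω | f ω < 0} :=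
  Set.disjoint_left.mpr fun _ h h' => lt_asymm (α := ℝ) h h'

lemma compl_setOf_pos_union_neg (f : Ω → ℝ) :
    ({ω | 0 < f ω} ∪ {ω | f ω < 0})ᶜ = {ω | f ω = 0} := by
  ext ω
  simp [le_antisymm_iff]

variable [MeasurableSpace Ω] {μ : Measure Ω}

lemma measure_setOf_eq_zero_eq_zero [IsProbabilityMeasure μ] {f : Ω → ℝ} (hf : Measurable f)
    {α : ℝ} (hα : α ∈ Set.Icc (0 : ℝ) 1) (hpos : μ {ω | 0 < f ω} = ENNReal.ofReal α)
    (hneg : μ {ω | f ω < 0} = ENNReal.ofReal (1 - α)) : μ {ω | f ω = 0} = 0 := by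
  rw [← compl_setOf_pos_union_neg, prob_compl_eq_one_sub
      ((measurableSet_lt measurable_const hf).union (measurableSet_lt hf measurable_const)),
    measure_union (disjoint_setOf_pos_neg f) (measurableSet_lt hf measurable_const), hpos, hneg,
    ← ENNReal.ofReal_add hα.1 (by linarith [hα.2]), add_sub_cancel, ENNReal.ofReal_one, tsub_self]

lemma measureReal_eq_inter_pos_add_inter_neg [IsFiniteMeasure μ] {f : Ω → ℝ} (hf : Measurable f)
    (h0 : μ {ω | f ω = 0} = 0) {E : Set Ω} (hE : MeasurableSet E) :
    μ.real E = μ.real (E ∩ {ω | 0 < f ω}) + μ.real (E ∩ {ω | f ω < 0}) := by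
  rw [← measureReal_union ((disjoint_setOf_pos_neg f).mono Set.inter_subset_right
      Set.inter_subset_right) (hE.inter (measurableSet_lt hf measurable_const)),
    ← Set.inter_union_distrib_left, Measure.real, Measure.real,
    measure_inter_conull (by rwa [compl_setOf_pos_union_neg])]

lemma measurableSet_mul_neg (hmeas : ∀ i, Measurable (a i)) (i j : ℕ) :
    MeasurableSet {ω | a i ω * a j ω < 0} :=
  measurableSet_lt ((hmeas i).mul (hmeas j)) measurable_const

lemma measureReal_signChanges_succ [IsFiniteMeasure μ] (hmeas : ∀ i, Measurable (a i))
    (N j : ℕ) :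
    μ.real {ω | signChanges a (N + 1) ω = j} =
      μ.real {ω | signChanges a N ω = j} +
        μ.real ({ω | signChanges a N ω + 1 = j} ∩ {ω | a N ω * a (N + 1) ω < 0}) -
        μ.real ({ω | signChanges a N ω = j} ∩ {ω | a N ω * a (N + 1) ω < 0}) := by
  have hsplit : {ω | signChanges a (N + 1) ω = j} =
      ({ω | signChanges a N ω = j} \ {ω | a N ω * a (N + 1) ω < 0}) ∪
        ({ω | signChanges a N ω + 1 = j} ∩ {ω | a N ω * a (N + 1) ω < 0}) := by
    ext ω
    simp only [Set.mem_ofPred_eq, Set.mem_union, Set.mem_sdiff, Set.mem_inter_iff,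
      signChanges_succ]
    split_ifs <;> grind
  rw [hsplit, measureReal_union (Set.disjoint_sdiff_left.mono_right Set.inter_subset_right)
      ((measurableSet_signChanges_add_eq (fun i _ => hmeas i) 1 j).inter
        (measurableSet_mul_neg hmeas N (N + 1))),
    ← measureReal_inter_add_sdiff (s := {ω | signChanges a N ω = j})
      (measurableSet_mul_neg hmeas N (N + 1))]
  ring

/-- `S + c = k` stands for `S = k - c` without truncated subtraction. -/
lemma measureReal_signChanges_add_eq (N c k : ℕ) :
    μ.real {ω | signChanges a N ω + c = k} =
      if k < c then 0 else signChangeProb μ a (k - c) N := by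
  split_ifs with hkc
  · convert measureReal_empty (μ := μ)
    ext ω
    simp only [Set.mem_ofPred_eq, Set.mem_empty_iff_false, iff_false]
    omega
  · rw [signChangeProb, ← Measure.real]
    congr 1
    ext ω
    simp only [Set.mem_ofPred_eq]
    omega

lemma iSup_comap_le_of_measurable (hmeas : ∀ i, Measurable (a i)) (N : ℕ) :
    (𝓕 N) ≤ ‹MeasurableSpace Ω› :=
  iSup₂_le fun i _ => (hmeas i).comap_le

lemma measureReal_inter_preimage_eq_mul_of_lt (hmeas : ∀ i, Measurable (a i))
    (hindep : iIndepFun (fun i : Fin (n + 1) => a i) μ) {N j : ℕ} (hNj : N < j) (hjn : j ≤ n)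
    {A : Set Ω} (hA : MeasurableSet[𝓕 N] A) {B : Set ℝ} (hB : MeasurableSet B) :
    μ.real (A ∩ a j ⁻¹' B) = μ.real A * μ.real (a j ⁻¹' B) := by
  let S : Set (Fin (n + 1)) := {i | (i : ℕ) ≤ N}
  have hle : (𝓕 N) ≤ ⨆ i ∈ S, MeasurableSpace.comap (a i) inferInstance :=
    iSup₂_le fun i hi => le_iSup₂ (f := fun (i : Fin (n + 1)) (_ : i ∈ S) =>
      MeasurableSpace.comap (a i) _) (⟨i, by omega⟩ : Fin (n + 1)) hi
  have := hindep.measure_inter_preimage_eq_mul_of_notMem (f := fun i : Fin (n + 1) => a i)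
    (fun i => hmeas i) (j := ⟨j, by omega⟩) (show ¬j ≤ N by omega) (hle A hA) hB
  simp only [Measure.real, this, ENNReal.toReal_mul]

lemma measureReal_inter_preimage_inter_preimage (hmeas : ∀ i, Measurable (a i))
    (hindep : iIndepFun (fun i : Fin (n + 1) => a i) μ) {m : ℕ} (hm : m + 2 ≤ n) {A : Set Ω}
    (hA : MeasurableSet[𝓕 m] A) {B C : Set ℝ} (hB : MeasurableSet B) (hC : MeasurableSet C) :
    μ.real (A ∩ a (m + 1) ⁻¹' B ∩ a (m + 2) ⁻¹' C) =
      μ.real A * μ.real (a (m + 1) ⁻¹' B) * μ.real (a (m + 2) ⁻¹' C) := by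
  have hmono : (𝓕 m) ≤ 𝓕 (m + 1) := biSup_mono fun _ hi => hi.trans m.le_succ
  have hA' : MeasurableSet[𝓕 (m + 1)] (A ∩ a (m + 1) ⁻¹' B) :=
    (hmono _ hA).inter (measurable_iSup_comap_of_le le_rfl hB)
  rw [measureReal_inter_preimage_eq_mul_of_lt hmeas hindep (by omega) hm hA' hC,
    measureReal_inter_preimage_eq_mul_of_lt hmeas hindep (by omega) (by omega) hA hB]

lemma measureReal_inter_signChange_inter_signChange [IsFiniteMeasure μ]
    (hmeas : ∀ i, Measurable (a i)) (hindep : iIndepFun (fun i : Fin (n + 1) => a i) μ) {m : ℕ}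
    (hm : m + 2 ≤ n) {α : ℝ} (hpos : ∀ i ≤ n, μ.real (a i ⁻¹' Set.Ioi 0) = α)
    (hneg : ∀ i ≤ n, μ.real (a i ⁻¹' Set.Iio 0) = 1 - α) (h0 : μ {ω | a m ω = 0} = 0)
    {A : Set Ω} (hA : MeasurableSet[𝓕 m] A) :
    μ.real (A ∩ {ω | a m ω * a (m + 1) ω < 0} ∩ {ω | a (m + 1) ω * a (m + 2) ω < 0}) =
      α * (1 - α) * μ.real A := by
  have hA₀ : MeasurableSet A := iSup_comap_le_of_measurable hmeas m A hA
  have ham : Measurable[𝓕 m] (a m) := measurable_iSup_comap_of_le le_rfl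
  have hpos_split : A ∩ {ω | a m ω * a (m + 1) ω < 0} ∩ {ω | a (m + 1) ω * a (m + 2) ω < 0} ∩
      {ω | 0 < a m ω} =
        A ∩ {ω | 0 < a m ω} ∩ a (m + 1) ⁻¹' Set.Iio 0 ∩ a (m + 2) ⁻¹' Set.Ioi 0 := by
    ext ω
    simp only [Set.mem_inter_iff, Set.mem_ofPred_eq, Set.mem_preimage, Set.mem_Ioi, Set.mem_Iio,
      mul_neg_iff]
    grind
  have hneg_split : A ∩ {ω | a m ω * a (m + 1) ω < 0} ∩ {ω | a (m + 1) ω * a (m + 2) ω < 0} ∩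
      {ω | a m ω < 0} =
        A ∩ {ω | a m ω < 0} ∩ a (m + 1) ⁻¹' Set.Ioi 0 ∩ a (m + 2) ⁻¹' Set.Iio 0 := by
    ext ω
    simp only [Set.mem_inter_iff, Set.mem_ofPred_eq, Set.mem_preimage, Set.mem_Ioi, Set.mem_Iio,
      mul_neg_iff]
    grind
  rw [measureReal_eq_inter_pos_add_inter_neg (hmeas m) h0
      ((hA₀.inter (measurableSet_mul_neg hmeas _ _)).inter (measurableSet_mul_neg hmeas _ _)),
    hpos_split, hneg_split, measureReal_eq_inter_pos_add_inter_neg (hmeas m) h0 hA₀,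
    measureReal_inter_preimage_inter_preimage hmeas hindep hm
      (hA.inter (measurableSet_lt measurable_const ham)) measurableSet_Iio measurableSet_Ioi,
    measureReal_inter_preimage_inter_preimage hmeas hindep hm
      (hA.inter (measurableSet_lt ham measurable_const)) measurableSet_Ioi measurableSet_Iio,
    hpos (m + 1) (by omega), hpos (m + 2) hm, hneg (m + 1) (by omega), hneg (m + 2) hm]
  ring

lemma measureReal_inter_compl_signChange_inter_signChange [IsFiniteMeasure μ]
    (hmeas : ∀ i, Measurable (a i)) (hindep : iIndepFun (fun i : Fin (n + 1) => a i) μ) {m : ℕ}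
    (hm : m + 2 ≤ n) {α : ℝ} (hpos : ∀ i ≤ n, μ.real (a i ⁻¹' Set.Ioi 0) = α)
    (hneg : ∀ i ≤ n, μ.real (a i ⁻¹' Set.Iio 0) = 1 - α) (h0 : μ {ω | a m ω = 0} = 0)
    {A : Set Ω} (hA : MeasurableSet[𝓕 m] A) :
    μ.real (A ∩ {ω | a m ω * a (m + 1) ω < 0}ᶜ ∩ {ω | a (m + 1) ω * a (m + 2) ω < 0}) =
      α * (1 - α) * μ.real A := by
  have hA₀ : MeasurableSet A := iSup_comap_le_of_measurable hmeas m A hA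
  have ham : Measurable[𝓕 m] (a m) := measurable_iSup_comap_of_le le_rfl
  have hpos_split : A ∩ {ω | a m ω * a (m + 1) ω < 0}ᶜ ∩ {ω | a (m + 1) ω * a (m + 2) ω < 0} ∩
      {ω | 0 < a m ω} =
        A ∩ {ω | 0 < a m ω} ∩ a (m + 1) ⁻¹' Set.Ioi 0 ∩ a (m + 2) ⁻¹' Set.Iio 0 := by
    ext ω
    simp only [Set.mem_inter_iff, Set.mem_compl_iff, Set.mem_ofPred_eq, Set.mem_preimage,
      Set.mem_Ioi, Set.mem_Iio, mul_neg_iff]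
    grind
  have hneg_split : A ∩ {ω | a m ω * a (m + 1) ω < 0}ᶜ ∩ {ω | a (m + 1) ω * a (m + 2) ω < 0} ∩
      {ω | a m ω < 0} =
        A ∩ {ω | a m ω < 0} ∩ a (m + 1) ⁻¹' Set.Iio 0 ∩ a (m + 2) ⁻¹' Set.Ioi 0 := by
    ext ω
    simp only [Set.mem_inter_iff, Set.mem_compl_iff, Set.mem_ofPred_eq, Set.mem_preimage,
      Set.mem_Ioi, Set.mem_Iio, mul_neg_iff]
    grind
  rw [measureReal_eq_inter_pos_add_inter_neg (hmeas m) h0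
      ((hA₀.inter (measurableSet_mul_neg hmeas _ _).compl).inter (measurableSet_mul_neg hmeas _ _)),
    hpos_split, hneg_split, measureReal_eq_inter_pos_add_inter_neg (hmeas m) h0 hA₀,
    measureReal_inter_preimage_inter_preimage hmeas hindep hm
      (hA.inter (measurableSet_lt measurable_const ham)) measurableSet_Ioi measurableSet_Iio,
    measureReal_inter_preimage_inter_preimage hmeas hindep hm
      (hA.inter (measurableSet_lt ham measurable_const)) measurableSet_Iio measurableSet_Ioi,
    hpos (m + 1) (by omega), hpos (m + 2) hm, hneg (m + 1) (by omega), hneg (m + 2) hm]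
  ring

lemma measureReal_signChanges_add_inter_signChange [IsFiniteMeasure μ]
    (hmeas : ∀ i, Measurable (a i)) (hindep : iIndepFun (fun i : Fin (n + 1) => a i) μ) {m : ℕ}
    (hm : m + 2 ≤ n) {α : ℝ} (hpos : ∀ i ≤ n, μ.real (a i ⁻¹' Set.Ioi 0) = α)
    (hneg : ∀ i ≤ n, μ.real (a i ⁻¹' Set.Iio 0) = 1 - α) (h0 : μ {ω | a m ω = 0} = 0) (c j : ℕ) :
    μ.real ({ω | signChanges a (m + 1) ω + c = j} ∩ {ω | a (m + 1) ω * a (m + 2) ω < 0}) =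
      α * (1 - α) * (μ.real {ω | signChanges a m ω + c = j} +
        μ.real {ω | signChanges a m ω + (c + 1) = j}) := by
  have hsplit : {ω | signChanges a (m + 1) ω + c = j} ∩ {ω | a (m + 1) ω * a (m + 2) ω < 0} =
      {ω | signChanges a m ω + c = j} ∩ {ω | a m ω * a (m + 1) ω < 0}ᶜ ∩
          {ω | a (m + 1) ω * a (m + 2) ω < 0} ∪
        {ω | signChanges a m ω + (c + 1) = j} ∩ {ω | a m ω * a (m + 1) ω < 0} ∩
          {ω | a (m + 1) ω * a (m + 2) ω < 0} := by
    ext ω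
    simp only [Set.mem_inter_iff, Set.mem_union, Set.mem_compl_iff, Set.mem_ofPred_eq,
      signChanges_succ]
    split_ifs <;> grind
  have hS : ∀ c', MeasurableSet[𝓕 m] {ω | signChanges a m ω + c' = j} := fun c' =>
    measurableSet_signChanges_add_eq (fun _ hi => measurable_iSup_comap_of_le hi) c' j
  rw [hsplit, measureReal_union (Set.disjoint_left.mpr fun ω h h' => h.1.2 h'.1.2)
      (((iSup_comap_le_of_measurable hmeas m _ (hS (c + 1))).inter
        (measurableSet_mul_neg hmeas _ _)).inter (measurableSet_mul_neg hmeas _ _)),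
    measureReal_inter_compl_signChange_inter_signChange hmeas hindep hm hpos hneg h0 (hS c),
    measureReal_inter_signChange_inter_signChange hmeas hindep hm hpos hneg h0 (hS (c + 1))]
  ring

end

/-- Second-order recursion for the sign-change probabilities:
`p_{k,n} = α(1−α)·(p_{k−2,n−2} − p_{k,n−2}) + p_{k,n−1}`
(with the convention `p_{j,·} = 0` for `j < 0`). -/
theorem prob_signChanges_recursion
    {Ω : Type*} [MeasurableSpace Ω] (μ : Measure Ω) [IsProbabilityMeasure μ]
    (n : ℕ) (hn : 2 ≤ n) (α : ℝ) (hα : α ∈ Set.Icc (0 : ℝ) 1) (a : ℕ → Ω → ℝ)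
    (hmeas : ∀ i, Measurable (a i))
    (hindep : iIndepFun
      (fun i : Fin (n + 1) => a i) μ)
    (hpos : ∀ i ≤ n, μ {ω | 0 < a i ω} = ENNReal.ofReal α)
    (hneg : ∀ i ≤ n, μ {ω | a i ω < 0} = ENNReal.ofReal (1 - α)) :
    ∀ k : ℕ,
      signChangeProb μ a k n =
        α * (1 - α) * ((if k < 2 then 0 else signChangeProb μ a (k - 2) (n - 2)) -
          signChangeProb μ a k (n - 2)) + signChangeProb μ a k (n - 1) := by
  intro k
  obtain ⟨m, rfl⟩ : ∃ m, n = m + 2 := ⟨n - 2, by omega⟩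
  have hposR : ∀ i ≤ m + 2, μ.real (a i ⁻¹' Set.Ioi 0) = α := fun i hi =>
    (congrArg ENNReal.toReal (hpos i hi)).trans (ENNReal.toReal_ofReal hα.1)
  have hnegR : ∀ i ≤ m + 2, μ.real (a i ⁻¹' Set.Iio 0) = 1 - α := fun i hi =>
    (congrArg ENNReal.toReal (hneg i hi)).trans (ENNReal.toReal_ofReal (by linarith [hα.2]))
  have h0 := measure_setOf_eq_zero_eq_zero (hmeas m) hα (hpos m (by omega)) (hneg m (by omega))
  have hstep := measureReal_signChanges_succ (μ := μ) hmeas (m + 1) k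
  have hD0 := measureReal_signChanges_add_inter_signChange hmeas hindep le_rfl hposR hnegR h0 0 k
  have hD1 := measureReal_signChanges_add_inter_signChange hmeas hindep le_rfl hposR hnegR h0 1 k
  rw [show m + 1 + 1 = m + 2 from rfl] at hstep
  rw [show (1 : ℕ) + 1 = 2 from rfl, measureReal_signChanges_add_eq m 2] at hD1
  simp only [add_zero, zero_add] at hD0
  simp only [Nat.add_sub_cancel, show m + 2 - 1 = m + 1 from rfl]
  show μ.real _ = α * (1 - α) * (_ - μ.real _) + μ.real _
  linear_combination hstep + hD1 - hD0
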